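/- arXiv:1304.4589 — 3 statements merged into one kernel-verified Lean document; each statement's English description precedes it below -/
import Mathlib

section
/- Suppose φ₂ takes the transmission initial values φ₂(ξ+) = (θ23·φ₁(ξ−) + θ24·φ₁'(ξ−))/θ12 and φ₂'(ξ+) = −(θ13·φ₁(ξ−) + θ14·φ₁'(ξ−))/θ12, and χ₁ takes the values χ₁(ξ−) = −(θ14·χ₂(ξ+) + θ24·χ₂'(ξ+))/θ34 and χ₁'(ξ−) = (θ13·χ₂(ξ+) + θ23·χ₂'(ξ+))/θ34, where θjk denotes the determinant of the j-th and k-th columns of the 2×4 matrix M with rows (δ₁⁺, δ₀⁺, δ₁⁻, δ₀⁻) and (γ₁⁺, γ₀⁺, γ₁⁻, γ₀⁻), and θ12, θ34 ≠ 0. Then the Wronskian across the interface satisfies φ₂(ξ+)χ₂'(ξ+) − φ₂'(ξ+)χ₂(ξ+) = (θ34/θ12)·(φ₁(ξ−)χ₁'(ξ−) − φ₁'(ξ−)χ₁(ξ−)). -/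
/-- Transmission of the Wronskian across an interface point, for the recurrently
defined solutions φ₂ and χ₁. -/
theorem wronskian_transmission
    (d1p d0p d1m d0m g1p g0p g1m g0m : ℝ)
    (θ12 θ13 θ14 θ23 θ24 θ34 : ℝ)
    (hθ12 : θ12 = d1p * g0p - d0p * g1p)
    (hθ13 : θ13 = d1p * g1m - d1m * g1p)
    (hθ14 : θ14 = d1p * g0m - d0m * g1p)
    (hθ23 : θ23 = d0p * g1m - d1m * g0p)
    (hθ24 : θ24 = d0p * g0m - d0m * g0p)
    (hθ34 : θ34 = d1m * g0m - d0m * g1m)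
    (h12 : θ12 ≠ 0) (h34 : θ34 ≠ 0)
    (φ₁ φ₁' χ₂ χ₂' φ₂ φ₂' χ₁ χ₁' : ℂ)
    (hφ₂ : φ₂ = ((θ23 : ℂ) * φ₁ + (θ24 : ℂ) * φ₁') / (θ12 : ℂ))
    (hφ₂' : φ₂' = -((θ13 : ℂ) * φ₁ + (θ14 : ℂ) * φ₁') / (θ12 : ℂ))
    (hχ₁ : χ₁ = -((θ14 : ℂ) * χ₂ + (θ24 : ℂ) * χ₂') / (θ34 : ℂ))
    (hχ₁' : χ₁' = ((θ13 : ℂ) * χ₂ + (θ23 : ℂ) * χ₂') / (θ34 : ℂ)) :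
    φ₂ * χ₂' - φ₂' * χ₂ = ((θ34 : ℂ) / (θ12 : ℂ)) * (φ₁ * χ₁' - φ₁' * χ₁) := by
  have hplR : θ12 * θ34 - θ13 * θ24 + θ14 * θ23 = 0 := by
    rw [hθ12, hθ13, hθ14, hθ23, hθ24, hθ34]; ring
  have hpl : (θ12 : ℂ) * θ34 - θ13 * θ24 + θ14 * θ23 = 0 := by exact_mod_cast hplR
  have h12' : (θ12 : ℂ) ≠ 0 := by exact_mod_cast h12
  have h34' : (θ34 : ℂ) ≠ 0 := by exact_mod_cast h34
  subst hφ₂ hφ₂' hχ₁ hχ₁'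
  field_simp
  subst hθ12 hθ13 hθ14 hθ23 hθ24 hθ34
  push_cast
  ring
end

section
/- (Green's identity with transmission and boundary corrections, single interface case n = 1.) Let a < ξ < b, and let f, g be twice continuously differentiable on [a, ξ] and on [ξ, b] (with one-sided limits at ξ), with ℓᵢu = −ρᵢ²u'' + qu on each subinterval, ρ₁, ρ₂ ≠ 0. Suppose at the interface θ34·W(f, conj g; ξ−) = θ12·W(f, conj g; ξ+) with θ12, θ34 > 0. Then θ34·(1/ρ₁²)∫_a^ξ [(ℓ₁f)conj(g) − f·conj(ℓ₁g)] dx + θ12·(1/ρ₂²)∫_ξ^b [(ℓ₂f)conj(g) − f·conj(ℓ₂g)] dx = θ12·W(f, conj g; b) − θ34·W(f, conj g; a). -/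
/-!
On each piece, the Lagrange identity `(ℓu) · conj v - u · conj (ℓv) = ρ² (u · conj v'' - u'' · conj v)`
turns the integrand, divided by `ρ²`, into the derivative of the Wronskian `W(u, conj v)`.
After the fundamental theorem of calculus the two interface terms at `ξ` cancel by the
weighted transmission condition, leaving the boundary terms at `a` and `b`.
-/

open intervalIntegral ComplexConjugate

def conjWronskian (f f' g g' : ℝ → ℂ) (x : ℝ) : ℂ :=
  f x * conj (g' x) - f' x * conj (g x)

theorem hasDerivAt_conjWronskian {f f' f'' g g' g'' : ℝ → ℂ} {x : ℝ}
    (hf : HasDerivAt f (f' x) x) (hf' : HasDerivAt f' (f'' x) x)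
    (hg : HasDerivAt g (g' x) x) (hg' : HasDerivAt g' (g'' x) x) :
    HasDerivAt (conjWronskian f f' g g') (f x * conj (g'' x) - f'' x * conj (g x)) x :=
  ((hf.mul hg'.star).sub (hf'.mul hg.star)).congr_deriv (by simp only [starRingEnd_apply]; ring)

theorem integral_eq_conjWronskian_sub {c d : ℝ} (hcd : c ≤ d) {f f' f'' g g' g'' : ℝ → ℂ}
    (hf : ∀ x ∈ Set.Icc c d, HasDerivAt f (f' x) x)
    (hf' : ∀ x ∈ Set.Icc c d, HasDerivAt f' (f'' x) x)
    (hf'' : ContinuousOn f'' (Set.Icc c d))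
    (hg : ∀ x ∈ Set.Icc c d, HasDerivAt g (g' x) x)
    (hg' : ∀ x ∈ Set.Icc c d, HasDerivAt g' (g'' x) x)
    (hg'' : ContinuousOn g'' (Set.Icc c d)) :
    ∫ x in c..d, (f x * conj (g'' x) - f'' x * conj (g x))
      = conjWronskian f f' g g' d - conjWronskian f f' g g' c := by
  rw [← Set.uIcc_of_le hcd] at hf hf' hf'' hg hg' hg''
  have hf_cont : ContinuousOn f (Set.uIcc c d) :=
    fun x hx => (hf x hx).continuousAt.continuousWithinAt
  have hg_cont : ContinuousOn g (Set.uIcc c d) :=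
    fun x hx => (hg x hx).continuousAt.continuousWithinAt
  refine integral_eq_sub_of_hasDerivAt
    (fun x hx => hasDerivAt_conjWronskian (hf x hx) (hf' x hx) (hg x hx) (hg' x hx)) ?_
  exact ContinuousOn.intervalIntegrable <|
    (hf_cont.mul (Complex.continuous_conj.comp_continuousOn hg'')).sub
      (hf''.mul (Complex.continuous_conj.comp_continuousOn hg_cont))

theorem lagrange_identity (ρ q : ℝ) (u u'' v v'' : ℂ) :
    (-(ρ : ℂ) ^ 2 * u'' + q * u) * conj v - u * conj (-(ρ : ℂ) ^ 2 * v'' + q * v)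
      = (ρ : ℂ) ^ 2 * (u * conj v'' - u'' * conj v) := by
  simp only [map_add, map_mul, map_neg, map_pow, Complex.conj_ofReal]
  ring

theorem greens_identity_interval {c d : ℝ} (hcd : c ≤ d) {ρ : ℝ} (hρ : ρ ≠ 0) (q : ℝ → ℝ)
    {f f' f'' g g' g'' : ℝ → ℂ}
    (hf : ∀ x ∈ Set.Icc c d, HasDerivAt f (f' x) x)
    (hf' : ∀ x ∈ Set.Icc c d, HasDerivAt f' (f'' x) x)
    (hf'' : ContinuousOn f'' (Set.Icc c d))
    (hg : ∀ x ∈ Set.Icc c d, HasDerivAt g (g' x) x)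
    (hg' : ∀ x ∈ Set.Icc c d, HasDerivAt g' (g'' x) x)
    (hg'' : ContinuousOn g'' (Set.Icc c d)) :
    (1 : ℂ) / (ρ : ℂ) ^ 2 *
        ∫ x in c..d, ((-(ρ : ℂ) ^ 2 * f'' x + (q x : ℂ) * f x) * conj (g x)
          - f x * conj (-(ρ : ℂ) ^ 2 * g'' x + (q x : ℂ) * g x))
      = conjWronskian f f' g g' d - conjWronskian f f' g g' c := by
  have hρ' : (ρ : ℂ) ^ 2 ≠ 0 := pow_ne_zero 2 (Complex.ofReal_ne_zero.mpr hρ)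
  simp only [lagrange_identity, integral_const_mul]
  rw [integral_eq_conjWronskian_sub hcd hf hf' hf'' hg hg' hg'', one_div, inv_mul_cancel_left₀ hρ']

/-- The two smooth pieces of f and g on [a,ξ] and [ξ,b] are denoted f₁, f₂, g₁, g₂,
so that one-sided limits at ξ are the values of the pieces at ξ. -/
theorem greens_identity_transmission_general
    (a ξ b : ℝ) (haξ : a < ξ) (hξb : ξ < b)
    (ρ₁ ρ₂ : ℝ) (hρ₁ : ρ₁ ≠ 0) (hρ₂ : ρ₂ ≠ 0)
    (q : ℝ → ℝ)
    (θ12 θ34 : ℝ)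
    (f₁ f₁' f₁'' g₁ g₁' g₁'' f₂ f₂' f₂'' g₂ g₂' g₂'' : ℝ → ℂ)
    (hf₁ : ∀ x ∈ Set.Icc a ξ, HasDerivAt f₁ (f₁' x) x)
    (hf₁' : ∀ x ∈ Set.Icc a ξ, HasDerivAt f₁' (f₁'' x) x)
    (hf₁'' : ContinuousOn f₁'' (Set.Icc a ξ))
    (hg₁ : ∀ x ∈ Set.Icc a ξ, HasDerivAt g₁ (g₁' x) x)
    (hg₁' : ∀ x ∈ Set.Icc a ξ, HasDerivAt g₁' (g₁'' x) x)
    (hg₁'' : ContinuousOn g₁'' (Set.Icc a ξ))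
    (hf₂ : ∀ x ∈ Set.Icc ξ b, HasDerivAt f₂ (f₂' x) x)
    (hf₂' : ∀ x ∈ Set.Icc ξ b, HasDerivAt f₂' (f₂'' x) x)
    (hf₂'' : ContinuousOn f₂'' (Set.Icc ξ b))
    (hg₂ : ∀ x ∈ Set.Icc ξ b, HasDerivAt g₂ (g₂' x) x)
    (hg₂' : ∀ x ∈ Set.Icc ξ b, HasDerivAt g₂' (g₂'' x) x)
    (hg₂'' : ContinuousOn g₂'' (Set.Icc ξ b))
    -- interface Wronskian relation: θ34·W(f, conj g; ξ−) = θ12·W(f, conj g; ξ+)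
    (hint : (θ34 : ℂ) * (f₁ ξ * (starRingEnd ℂ) (g₁' ξ) - f₁' ξ * (starRingEnd ℂ) (g₁ ξ))
          = (θ12 : ℂ) * (f₂ ξ * (starRingEnd ℂ) (g₂' ξ) - f₂' ξ * (starRingEnd ℂ) (g₂ ξ))) :
    (θ34 : ℂ) * ((1 : ℂ) / (ρ₁ : ℂ)^2) *
        (∫ x in a..ξ,
          ((-(ρ₁ : ℂ)^2 * f₁'' x + (q x : ℂ) * f₁ x) * (starRingEnd ℂ) (g₁ x)
            - f₁ x * (starRingEnd ℂ) (-(ρ₁ : ℂ)^2 * g₁'' x + (q x : ℂ) * g₁ x)))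
      + (θ12 : ℂ) * ((1 : ℂ) / (ρ₂ : ℂ)^2) *
        (∫ x in ξ..b,
          ((-(ρ₂ : ℂ)^2 * f₂'' x + (q x : ℂ) * f₂ x) * (starRingEnd ℂ) (g₂ x)
            - f₂ x * (starRingEnd ℂ) (-(ρ₂ : ℂ)^2 * g₂'' x + (q x : ℂ) * g₂ x)))
      = (θ12 : ℂ) * (f₂ b * (starRingEnd ℂ) (g₂' b) - f₂' b * (starRingEnd ℂ) (g₂ b))
        - (θ34 : ℂ) * (f₁ a * (starRingEnd ℂ) (g₁' a) - f₁' a * (starRingEnd ℂ) (g₁ a)) := by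
  rw [mul_assoc, mul_assoc,
    greens_identity_interval haξ.le hρ₁ q hf₁ hf₁' hf₁'' hg₁ hg₁' hg₁'',
    greens_identity_interval hξb.le hρ₂ q hf₂ hf₂' hf₂'' hg₂ hg₂' hg₂'']
  unfold conjWronskian
  linear_combination hint

/-- Green's identity with transmission and boundary corrections (one interface).
The two smooth pieces of f and g on [a,ξ] and [ξ,b] are denoted f₁, f₂, g₁, g₂,
so that one-sided limits at ξ are the values of the pieces at ξ. -/
theorem greens_identity_transmission
    (a ξ b : ℝ) (haξ : a < ξ) (hξb : ξ < b)
    (ρ₁ ρ₂ : ℝ) (hρ₁ : ρ₁ ≠ 0) (hρ₂ : ρ₂ ≠ 0)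
    (q : ℝ → ℝ) (hq₁ : ContinuousOn q (Set.Icc a ξ)) (hq₂ : ContinuousOn q (Set.Icc ξ b))
    (θ12 θ34 : ℝ) (hθ12 : 0 < θ12) (hθ34 : 0 < θ34)
    (f₁ f₁' f₁'' g₁ g₁' g₁'' f₂ f₂' f₂'' g₂ g₂' g₂'' : ℝ → ℂ)
    (hf₁ : ∀ x ∈ Set.Icc a ξ, HasDerivAt f₁ (f₁' x) x)
    (hf₁' : ∀ x ∈ Set.Icc a ξ, HasDerivAt f₁' (f₁'' x) x)
    (hf₁'' : ContinuousOn f₁'' (Set.Icc a ξ))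
    (hg₁ : ∀ x ∈ Set.Icc a ξ, HasDerivAt g₁ (g₁' x) x)
    (hg₁' : ∀ x ∈ Set.Icc a ξ, HasDerivAt g₁' (g₁'' x) x)
    (hg₁'' : ContinuousOn g₁'' (Set.Icc a ξ))
    (hf₂ : ∀ x ∈ Set.Icc ξ b, HasDerivAt f₂ (f₂' x) x)
    (hf₂' : ∀ x ∈ Set.Icc ξ b, HasDerivAt f₂' (f₂'' x) x)
    (hf₂'' : ContinuousOn f₂'' (Set.Icc ξ b))
    (hg₂ : ∀ x ∈ Set.Icc ξ b, HasDerivAt g₂ (g₂' x) x)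
    (hg₂' : ∀ x ∈ Set.Icc ξ b, HasDerivAt g₂' (g₂'' x) x)
    (hg₂'' : ContinuousOn g₂'' (Set.Icc ξ b))
    -- interface Wronskian relation: θ34·W(f, conj g; ξ−) = θ12·W(f, conj g; ξ+)
    (hint : (θ34 : ℂ) * (f₁ ξ * (starRingEnd ℂ) (g₁' ξ) - f₁' ξ * (starRingEnd ℂ) (g₁ ξ))
          = (θ12 : ℂ) * (f₂ ξ * (starRingEnd ℂ) (g₂' ξ) - f₂' ξ * (starRingEnd ℂ) (g₂ ξ))) :
    (θ34 : ℂ) * ((1 : ℂ) / (ρ₁ : ℂ)^2) *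
        (∫ x in a..ξ,
          ((-(ρ₁ : ℂ)^2 * f₁'' x + (q x : ℂ) * f₁ x) * (starRingEnd ℂ) (g₁ x)
            - f₁ x * (starRingEnd ℂ) (-(ρ₁ : ℂ)^2 * g₁'' x + (q x : ℂ) * g₁ x)))
      + (θ12 : ℂ) * ((1 : ℂ) / (ρ₂ : ℂ)^2) *
        (∫ x in ξ..b,
          ((-(ρ₂ : ℂ)^2 * f₂'' x + (q x : ℂ) * f₂ x) * (starRingEnd ℂ) (g₂ x)
            - f₂ x * (starRingEnd ℂ) (-(ρ₂ : ℂ)^2 * g₂'' x + (q x : ℂ) * g₂ x)))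
      = (θ12 : ℂ) * (f₂ b * (starRingEnd ℂ) (g₂' b) - f₂' b * (starRingEnd ℂ) (g₂ b))
        - (θ34 : ℂ) * (f₁ a * (starRingEnd ℂ) (g₁' a) - f₁' a * (starRingEnd ℂ) (g₁ a)) :=
  greens_identity_transmission_general a ξ b haξ hξb ρ₁ ρ₂ hρ₁ hρ₂ q θ12 θ34 f₁ f₁' f₁'' g₁ g₁' g₁''
    f₂ f₂' f₂'' g₂ g₂' g₂'' hf₁ hf₁' hf₁'' hg₁ hg₁' hg₁'' hf₂ hf₂' hf₂'' hg₂ hg₂' hg₂'' hint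
end

section
/- (Orthogonality of eigenfunctions in the weighted sense, n = 1.) Let f and g be eigenfunctions of the boundary-value-transmission problem corresponding to distinct eigenvalues λ ≠ μ, i.e., −ρᵢ²h'' + qh = (eigenvalue)·h on each subinterval, the transmission conditions imply θ34·W(f, conj g; ξ−) = θ12·W(f, conj g; ξ+), and the λ-dependent boundary conditions (2) and (3) hold. Then θ34·(1/ρ₁²)∫_a^ξ f·conj(g) dx + θ12·(1/ρ₂²)∫_ξ^b f·conj(g) dx + (θ34/κ₁)·B'_a[f]·conj(B'_a[g]) + (θ12/κ₂)·B'_b[f]·conj(B'_b[g]) = 0. -/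
open intervalIntegral


lemma aux_wronskian_integral (a b : ℝ) (hab : a ≤ b) (ρ lam mu : ℝ) (hρ : ρ ≠ 0)
    (q : ℝ → ℝ) (f f' f'' g g' g'' : ℝ → ℂ)
    (hf : ∀ x ∈ Set.Icc a b, HasDerivAt f (f' x) x)
    (hf' : ∀ x ∈ Set.Icc a b, HasDerivAt f' (f'' x) x)
    (hg : ∀ x ∈ Set.Icc a b, HasDerivAt g (g' x) x)
    (hg' : ∀ x ∈ Set.Icc a b, HasDerivAt g' (g'' x) x)
    (hODEf : ∀ x ∈ Set.Icc a b, -(ρ:ℂ)^2 * f'' x + (q x : ℂ) * f x = (lam:ℂ) * f x)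
    (hODEg : ∀ x ∈ Set.Icc a b, -(ρ:ℂ)^2 * g'' x + (q x : ℂ) * g x = (mu:ℂ) * g x) :
    ((lam:ℂ) - mu) * (∫ x in a..b, f x * (starRingEnd ℂ) (g x))
      = (ρ:ℂ)^2 * ((f b * (starRingEnd ℂ) (g' b) - f' b * (starRingEnd ℂ) (g b))
        - (f a * (starRingEnd ℂ) (g' a) - f' a * (starRingEnd ℂ) (g a))) := by
  have hρc : (ρ:ℂ) ≠ 0 := by exact_mod_cast hρ
  set c : ℂ := ((lam:ℂ) - mu) / (ρ:ℂ)^2 with hc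
  have hW : ∀ x ∈ Set.uIcc a b,
      HasDerivAt (fun y => f y * (starRingEnd ℂ) (g' y) - f' y * (starRingEnd ℂ) (g y))
        (c * (f x * (starRingEnd ℂ) (g x))) x := by
    intro x hx
    rw [Set.uIcc_of_le hab] at hx
    have h1 : HasDerivAt (fun y => f y * (starRingEnd ℂ) (g' y) - f' y * (starRingEnd ℂ) (g y))
        (f' x * (starRingEnd ℂ) (g' x) + f x * (starRingEnd ℂ) (g'' x)
          - (f'' x * (starRingEnd ℂ) (g x) + f' x * (starRingEnd ℂ) (g' x))) x :=
      ((hf x hx).mul (hg' x hx).star).sub ((hf' x hx).mul (hg x hx).star)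
    convert h1 using 1
    have hF : f'' x = ((q x : ℂ) - lam) / (ρ:ℂ)^2 * f x := by
      field_simp
      linear_combination - hODEf x hx
    have hG : (starRingEnd ℂ) (g'' x) = ((q x : ℂ) - mu) / (ρ:ℂ)^2 * (starRingEnd ℂ) (g x) := by
      have h := congrArg (starRingEnd ℂ) (hODEg x hx)
      simp only [map_add, map_mul, map_neg, map_pow, Complex.conj_ofReal] at h
      field_simp
      linear_combination - h
    rw [hF, hG, hc]
    field_simp
    ring
  have hcont : ContinuousOn (fun x => c * (f x * (starRingEnd ℂ) (g x))) (Set.uIcc a b) := by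
    rw [Set.uIcc_of_le hab]
    have c1 : ContinuousOn f (Set.Icc a b) := fun x hx => (hf x hx).continuousAt.continuousWithinAt
    have c2 : ContinuousOn (fun x => (starRingEnd ℂ) (g x)) (Set.Icc a b) :=
      fun x hx => (HasDerivAt.star (hg x hx)).continuousAt.continuousWithinAt
    exact continuousOn_const.mul (c1.mul c2)
  have hFTC := intervalIntegral.integral_eq_sub_of_hasDerivAt hW
    (hcont.intervalIntegrable)
  rw [intervalIntegral.integral_const_mul] at hFTC
  rw [hc] at hFTC
  field_simp at hFTC
  linear_combination hFTC

lemma aux_bc (κ δ₁ δ₂ δ₃ δ₄ lam mu : ℝ) (hκdef : κ = δ₃ * δ₂ - δ₄ * δ₁)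
    (F F' G G' : ℂ)
    (hf : (δ₁ : ℂ) * F - (δ₂ : ℂ) * F' = (lam : ℂ) * ((δ₃ : ℂ) * F - (δ₄ : ℂ) * F'))
    (hg : (δ₁ : ℂ) * G - (δ₂ : ℂ) * G' = (mu : ℂ) * ((δ₃ : ℂ) * G - (δ₄ : ℂ) * G')) :
    ((lam:ℂ) - mu) * (((δ₃ : ℂ) * F - (δ₄ : ℂ) * F') * ((δ₃ : ℂ) * G - (δ₄ : ℂ) * G'))
      = (κ : ℂ) * (F * G' - F' * G) := by
  have h : (κ : ℂ) = (δ₃ : ℂ) * δ₂ - (δ₄ : ℂ) * δ₁ := by exact_mod_cast congrArg (Complex.ofReal) hκdef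
  linear_combination -((δ₃ : ℂ) * G - (δ₄ : ℂ) * G') * hf + ((δ₃ : ℂ) * F - (δ₄ : ℂ) * F') * hg - (F * G' - F' * G) * h


/-- Eigenfunctions of the boundary-value-transmission problem (n = 1)
corresponding to distinct eigenvalues are orthogonal in the weighted sense. -/
theorem eigenfunctions_weighted_orthogonal
    (a ξ b : ℝ) (haξ : a < ξ) (hξb : ξ < b)
    (ρ₁ ρ₂ : ℝ) (hρ₁ : ρ₁ ≠ 0) (hρ₂ : ρ₂ ≠ 0)
    (q : ℝ → ℝ) (hq₁ : ContinuousOn q (Set.Icc a ξ)) (hq₂ : ContinuousOn q (Set.Icc ξ b))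
    (θ12 θ34 κ₁ κ₂ : ℝ) (hθ12 : 0 < θ12) (hθ34 : 0 < θ34)
    (hκ₁ : 0 < κ₁) (hκ₂ : 0 < κ₂)
    (δ₁ δ₂ δ₃ δ₄ γ₁ γ₂ γ₃ γ₄ : ℝ)
    (hκ₁def : κ₁ = δ₃ * δ₂ - δ₄ * δ₁) (hκ₂def : κ₂ = γ₃ * γ₂ - γ₄ * γ₁)
    (lam mu : ℝ) (hne : lam ≠ mu)
    (f₁ f₁' f₁'' g₁ g₁' g₁'' f₂ f₂' f₂'' g₂ g₂' g₂'' : ℝ → ℂ)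
    (hf₁ : ∀ x ∈ Set.Icc a ξ, HasDerivAt f₁ (f₁' x) x)
    (hf₁' : ∀ x ∈ Set.Icc a ξ, HasDerivAt f₁' (f₁'' x) x)
    (hf₁'' : ContinuousOn f₁'' (Set.Icc a ξ))
    (hg₁ : ∀ x ∈ Set.Icc a ξ, HasDerivAt g₁ (g₁' x) x)
    (hg₁' : ∀ x ∈ Set.Icc a ξ, HasDerivAt g₁' (g₁'' x) x)
    (hg₁'' : ContinuousOn g₁'' (Set.Icc a ξ))
    (hf₂ : ∀ x ∈ Set.Icc ξ b, HasDerivAt f₂ (f₂' x) x)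
    (hf₂' : ∀ x ∈ Set.Icc ξ b, HasDerivAt f₂' (f₂'' x) x)
    (hf₂'' : ContinuousOn f₂'' (Set.Icc ξ b))
    (hg₂ : ∀ x ∈ Set.Icc ξ b, HasDerivAt g₂ (g₂' x) x)
    (hg₂' : ∀ x ∈ Set.Icc ξ b, HasDerivAt g₂' (g₂'' x) x)
    (hg₂'' : ContinuousOn g₂'' (Set.Icc ξ b))
    -- eigen-equations
    (hODEf₁ : ∀ x ∈ Set.Icc a ξ,
      -(ρ₁ : ℂ)^2 * f₁'' x + (q x : ℂ) * f₁ x = (lam : ℂ) * f₁ x)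
    (hODEf₂ : ∀ x ∈ Set.Icc ξ b,
      -(ρ₂ : ℂ)^2 * f₂'' x + (q x : ℂ) * f₂ x = (lam : ℂ) * f₂ x)
    (hODEg₁ : ∀ x ∈ Set.Icc a ξ,
      -(ρ₁ : ℂ)^2 * g₁'' x + (q x : ℂ) * g₁ x = (mu : ℂ) * g₁ x)
    (hODEg₂ : ∀ x ∈ Set.Icc ξ b,
      -(ρ₂ : ℂ)^2 * g₂'' x + (q x : ℂ) * g₂ x = (mu : ℂ) * g₂ x)
    -- interface Wronskian relation (implied by the transmission conditions)
    (hint : (θ34 : ℂ) * (f₁ ξ * (starRingEnd ℂ) (g₁' ξ) - f₁' ξ * (starRingEnd ℂ) (g₁ ξ))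
          = (θ12 : ℂ) * (f₂ ξ * (starRingEnd ℂ) (g₂' ξ) - f₂' ξ * (starRingEnd ℂ) (g₂ ξ)))
    -- λ-dependent boundary conditions for f and g
    (hbcfa : (δ₁ : ℂ) * f₁ a - (δ₂ : ℂ) * f₁' a
      = (lam : ℂ) * ((δ₃ : ℂ) * f₁ a - (δ₄ : ℂ) * f₁' a))
    (hbcfb : (γ₁ : ℂ) * f₂ b - (γ₂ : ℂ) * f₂' b
      = -(lam : ℂ) * ((γ₃ : ℂ) * f₂ b - (γ₄ : ℂ) * f₂' b))
    (hbcga : (δ₁ : ℂ) * g₁ a - (δ₂ : ℂ) * g₁' a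
      = (mu : ℂ) * ((δ₃ : ℂ) * g₁ a - (δ₄ : ℂ) * g₁' a))
    (hbcgb : (γ₁ : ℂ) * g₂ b - (γ₂ : ℂ) * g₂' b
      = -(mu : ℂ) * ((γ₃ : ℂ) * g₂ b - (γ₄ : ℂ) * g₂' b)) :
    (θ34 : ℂ) * ((1 : ℂ) / (ρ₁ : ℂ)^2) *
        (∫ x in a..ξ, f₁ x * (starRingEnd ℂ) (g₁ x))
      + (θ12 : ℂ) * ((1 : ℂ) / (ρ₂ : ℂ)^2) *
        (∫ x in ξ..b, f₂ x * (starRingEnd ℂ) (g₂ x))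
      + ((θ34 : ℂ) / (κ₁ : ℂ)) * ((δ₃ : ℂ) * f₁ a - (δ₄ : ℂ) * f₁' a) *
          (starRingEnd ℂ) ((δ₃ : ℂ) * g₁ a - (δ₄ : ℂ) * g₁' a)
      + ((θ12 : ℂ) / (κ₂ : ℂ)) * ((γ₃ : ℂ) * f₂ b - (γ₄ : ℂ) * f₂' b) *
          (starRingEnd ℂ) ((γ₃ : ℂ) * g₂ b - (γ₄ : ℂ) * g₂' b) = 0 := by
  
  -- conjugated quantities
  have hPg : (starRingEnd ℂ) ((δ₃ : ℂ) * g₁ a - (δ₄ : ℂ) * g₁' a)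
      = (δ₃ : ℂ) * (starRingEnd ℂ) (g₁ a) - (δ₄ : ℂ) * (starRingEnd ℂ) (g₁' a) := by
    simp [map_sub, map_mul, Complex.conj_ofReal]
  have hQg : (starRingEnd ℂ) ((γ₃ : ℂ) * g₂ b - (γ₄ : ℂ) * g₂' b)
      = (γ₃ : ℂ) * (starRingEnd ℂ) (g₂ b) - (γ₄ : ℂ) * (starRingEnd ℂ) (g₂' b) := by
    simp [map_sub, map_mul, Complex.conj_ofReal]
  have hbcga' : (δ₁ : ℂ) * (starRingEnd ℂ) (g₁ a) - (δ₂ : ℂ) * (starRingEnd ℂ) (g₁' a)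
      = ((mu : ℝ) : ℂ) * ((δ₃ : ℂ) * (starRingEnd ℂ) (g₁ a) - (δ₄ : ℂ) * (starRingEnd ℂ) (g₁' a)) := by
    have h := congrArg (starRingEnd ℂ) hbcga
    simpa [map_sub, map_mul, Complex.conj_ofReal] using h
  have hbcgb' : (γ₁ : ℂ) * (starRingEnd ℂ) (g₂ b) - (γ₂ : ℂ) * (starRingEnd ℂ) (g₂' b)
      = (((-mu : ℝ)) : ℂ) * ((γ₃ : ℂ) * (starRingEnd ℂ) (g₂ b) - (γ₄ : ℂ) * (starRingEnd ℂ) (g₂' b)) := by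
    have h := congrArg (starRingEnd ℂ) hbcgb
    push_cast
    simpa [map_sub, map_mul, map_neg, Complex.conj_ofReal] using h
  have hbcfb' : (γ₁ : ℂ) * f₂ b - (γ₂ : ℂ) * f₂' b
      = (((-lam : ℝ)) : ℂ) * ((γ₃ : ℂ) * f₂ b - (γ₄ : ℂ) * f₂' b) := by
    push_cast; exact hbcfb
  have h1 := aux_wronskian_integral a ξ haξ.le ρ₁ lam mu hρ₁ q f₁ f₁' f₁'' g₁ g₁' g₁''
    hf₁ hf₁' hg₁ hg₁' hODEf₁ hODEg₁
  have h2 := aux_wronskian_integral ξ b hξb.le ρ₂ lam mu hρ₂ q f₂ f₂' f₂'' g₂ g₂' g₂''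
    hf₂ hf₂' hg₂ hg₂' hODEf₂ hODEg₂
  have h3 := aux_bc κ₁ δ₁ δ₂ δ₃ δ₄ lam mu hκ₁def (f₁ a) (f₁' a)
    ((starRingEnd ℂ) (g₁ a)) ((starRingEnd ℂ) (g₁' a)) hbcfa hbcga'
  have h4 := aux_bc κ₂ γ₁ γ₂ γ₃ γ₄ (-lam) (-mu) hκ₂def (f₂ b) (f₂' b)
    ((starRingEnd ℂ) (g₂ b)) ((starRingEnd ℂ) (g₂' b)) hbcfb' hbcgb'
  push_cast at h4
  have hρ₁c : (ρ₁ : ℂ) ≠ 0 := by exact_mod_cast hρ₁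
  have hρ₂c : (ρ₂ : ℂ) ≠ 0 := by exact_mod_cast hρ₂
  have hκ₁c : (κ₁ : ℂ) ≠ 0 := by exact_mod_cast hκ₁.ne'
  have hκ₂c : (κ₂ : ℂ) ≠ 0 := by exact_mod_cast hκ₂.ne'
  have hlm : ((lam : ℂ) - mu) ≠ 0 := by
    rw [sub_ne_zero]
    exact_mod_cast hne
  rw [hPg, hQg]
  set I₁ := ∫ x in a..ξ, f₁ x * (starRingEnd ℂ) (g₁ x) with hI₁
  set I₂ := ∫ x in ξ..b, f₂ x * (starRingEnd ℂ) (g₂ x) with hI₂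
  have e1 : (θ34 : ℂ) * ((1 : ℂ) / (ρ₁ : ℂ)^2) * I₁ * ((lam : ℂ) - mu)
      = (θ34 : ℂ) * ((f₁ ξ * (starRingEnd ℂ) (g₁' ξ) - f₁' ξ * (starRingEnd ℂ) (g₁ ξ))
        - (f₁ a * (starRingEnd ℂ) (g₁' a) - f₁' a * (starRingEnd ℂ) (g₁ a))) := by
    field_simp
    linear_combination (θ34 : ℂ) * h1
  have e2 : (θ12 : ℂ) * ((1 : ℂ) / (ρ₂ : ℂ)^2) * I₂ * ((lam : ℂ) - mu)
      = (θ12 : ℂ) * ((f₂ b * (starRingEnd ℂ) (g₂' b) - f₂' b * (starRingEnd ℂ) (g₂ b))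
        - (f₂ ξ * (starRingEnd ℂ) (g₂' ξ) - f₂' ξ * (starRingEnd ℂ) (g₂ ξ))) := by
    field_simp
    linear_combination (θ12 : ℂ) * h2
  have e3 : ((θ34 : ℂ) / (κ₁ : ℂ)) * ((δ₃ : ℂ) * f₁ a - (δ₄ : ℂ) * f₁' a) *
        ((δ₃ : ℂ) * (starRingEnd ℂ) (g₁ a) - (δ₄ : ℂ) * (starRingEnd ℂ) (g₁' a)) * ((lam : ℂ) - mu)
      = (θ34 : ℂ) * (f₁ a * (starRingEnd ℂ) (g₁' a) - f₁' a * (starRingEnd ℂ) (g₁ a)) := by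
    field_simp
    linear_combination (θ34 : ℂ) * h3
  have e4 : ((θ12 : ℂ) / (κ₂ : ℂ)) * ((γ₃ : ℂ) * f₂ b - (γ₄ : ℂ) * f₂' b) *
        ((γ₃ : ℂ) * (starRingEnd ℂ) (g₂ b) - (γ₄ : ℂ) * (starRingEnd ℂ) (g₂' b)) * ((lam : ℂ) - mu)
      = -((θ12 : ℂ) * (f₂ b * (starRingEnd ℂ) (g₂' b) - f₂' b * (starRingEnd ℂ) (g₂ b))) := by
    field_simp
    linear_combination -(θ12 : ℂ) * h4
  have key : ((lam : ℂ) - mu) *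
      ((θ34 : ℂ) * ((1 : ℂ) / (ρ₁ : ℂ)^2) * I₁
      + (θ12 : ℂ) * ((1 : ℂ) / (ρ₂ : ℂ)^2) * I₂
      + ((θ34 : ℂ) / (κ₁ : ℂ)) * ((δ₃ : ℂ) * f₁ a - (δ₄ : ℂ) * f₁' a) *
          ((δ₃ : ℂ) * (starRingEnd ℂ) (g₁ a) - (δ₄ : ℂ) * (starRingEnd ℂ) (g₁' a))
      + ((θ12 : ℂ) / (κ₂ : ℂ)) * ((γ₃ : ℂ) * f₂ b - (γ₄ : ℂ) * f₂' b) *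
          ((γ₃ : ℂ) * (starRingEnd ℂ) (g₂ b) - (γ₄ : ℂ) * (starRingEnd ℂ) (g₂' b))) = 0 := by
    linear_combination e1 + e2 + e3 + e4 + hint
  exact (mul_eq_zero.mp key).resolve_left hlm
end
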